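/- If f is an almost periodic sequence on ℤ with mean value zero, then the partial sums F(n) = ∑_{k=n₀}^{n} f(k) satisfy F(n) = o(|n|) as |n| → ∞. -/

import Mathlib

open scoped UniformConvergence

def Translates (f : ℤ → ℂ) : Set (ℤ →ᵤ ℂ) :=
  {g | ∃ k : ℤ, g = UniformFun.ofFun (fun n => f (n + k))}

def AlmostPeriodicSeq (f : ℤ → ℂ) : Prop :=
  IsCompact (closure (Translates f))

/-
Almost periodicity yields boundedness of `f` and, for every `ε > 0`, a relatively dense set of
`ε`-almost periods `τ` (`‖f (n + τ) - f n‖ ≤ ε` for all `n`). A window sum of length `L` moves by at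
most `L ε` under an almost period and by at most `2 d M` under a shift by `d`, so every window of
length `L = 2N + 1` has nearly the same sum as the centred window `[-N, N]`, which is `o(L)` by the
mean-value hypothesis. Hence all windows of some length `L` have sum at most `ε L`, and chopping
`[n₀, n]` into such windows bounds `F n` by `ε |n| + O(1)`.
-/

open Finset Filter Asymptotics

theorem Asymptotics.isLittleO_of_forall_norm_le_mul_add {α E F : Type*} [SeminormedAddCommGroup E]
    [SeminormedAddCommGroup F] {l : Filter α} {u : α → E} {v : α → F}
    (hv : Tendsto (fun x => ‖v x‖) l atTop) (h : ∀ ε > 0, ∃ C, ∀ x, ‖u x‖ ≤ ε * ‖v x‖ + C) :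
    u =o[l] v := by
  refine isLittleO_iff.2 fun c hc => ?_
  obtain ⟨C, hC⟩ := h (c / 2) (half_pos hc)
  filter_upwards [hv.eventually_ge_atTop (2 * C / c)] with x hx
  have hCv : C ≤ c / 2 * ‖v x‖ := by
    rw [div_le_iff₀ hc] at hx
    linarith
  linarith [hC x]

section WindowSum

variable {E : Type*} [SeminormedAddCommGroup E]

def IsAlmostPeriod (f : ℤ → E) (ε : ℝ) (τ : ℤ) : Prop :=
  ∀ n, ‖f (n + τ) - f n‖ ≤ ε

noncomputable def windowSum (f : ℤ → E) (a : ℤ) (L : ℕ) : E :=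
  ∑ k ∈ Ico a (a + L), f k

variable {f : ℤ → E} {M ε : ℝ}

theorem windowSum_add (f : ℤ → E) (a : ℤ) (L t : ℕ) :
    windowSum f a (L + t) = windowSum f a L + windowSum f (a + L) t := by
  have hL : a ≤ a + L := by omega
  have ht : a + L ≤ a + (L + t : ℕ) := by omega
  rw [windowSum, windowSum, windowSum, ← Ico_union_Ico_eq_Ico hL ht,
    sum_union (Ico_disjoint_Ico_consecutive _ _ _)]
  push_cast
  rw [add_assoc]

theorem norm_windowSum_le (hM : ∀ n, ‖f n‖ ≤ M) (a : ℤ) (L : ℕ) :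
    ‖windowSum f a L‖ ≤ L * M := by
  simpa [windowSum, Int.card_Ico] using norm_sum_le_of_le (Ico a (a + L)) fun n _ => hM n

theorem norm_windowSum_add_sub_le (hM : ∀ n, ‖f n‖ ≤ M) (a : ℤ) (d L : ℕ) :
    ‖windowSum f (a + d) L - windowSum f a L‖ ≤ 2 * d * M := by
  have hsplit : windowSum f (a + d) L - windowSum f a L
      = windowSum f (a + L) d - windowSum f a d := by
    have h := windowSum_add f a L d
    rw [add_comm L d, windowSum_add] at h
    rw [sub_eq_sub_iff_add_eq_add, add_comm, h, add_comm]
  rw [hsplit]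
  calc _ ≤ ‖windowSum f (a + L) d‖ + ‖windowSum f a d‖ := norm_sub_le _ _
    _ ≤ d * M + d * M := add_le_add (norm_windowSum_le hM _ _) (norm_windowSum_le hM _ _)
    _ = 2 * d * M := by ring

theorem norm_windowSum_add_int_sub_le (hM : ∀ n, ‖f n‖ ≤ M) (a d : ℤ) (L : ℕ) :
    ‖windowSum f (a + d) L - windowSum f a L‖ ≤ 2 * d.natAbs * M := by
  rcases Int.natAbs_eq d with hd | hd <;> rw [hd]
  · exact norm_windowSum_add_sub_le hM a _ L
  · rw [norm_sub_rev]
    simpa using norm_windowSum_add_sub_le hM (a + -d.natAbs) d.natAbs L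

theorem IsAlmostPeriod.norm_windowSum_add_sub_le {τ : ℤ} (hτ : IsAlmostPeriod f ε τ) (a : ℤ)
    (L : ℕ) : ‖windowSum f (a + τ) L - windowSum f a L‖ ≤ L * ε := by
  have hshift : windowSum f (a + τ) L = ∑ k ∈ Ico a (a + L), f (k + τ) := by
    rw [windowSum, sum_Ico_add', add_right_comm]
  rw [hshift, windowSum, ← sum_sub_distrib]
  simpa [Int.card_Ico] using norm_sum_le_of_le (Ico a (a + L)) fun n _ => hτ n

theorem norm_windowSum_le_of_almostPeriods (hM : ∀ n, ‖f n‖ ≤ M) {ℓ : ℕ}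
    (hℓ : ∀ k, ∃ τ, IsAlmostPeriod f ε τ ∧ (k - τ).natAbs ≤ ℓ) (a b : ℤ) (L : ℕ) :
    ‖windowSum f a L‖ ≤ ‖windowSum f b L‖ + L * ε + 2 * ℓ * M := by
  obtain ⟨τ, hτ, hτℓ⟩ := hℓ (a - b)
  have hM0 : 0 ≤ M := (norm_nonneg _).trans (hM 0)
  have hgap : 2 * ((a - b - τ).natAbs : ℝ) * M ≤ 2 * ℓ * M := by gcongr
  have ha : a = b + τ + (a - b - τ) := by ring
  calc ‖windowSum f a L‖
      = ‖windowSum f b L + (windowSum f (b + τ) L - windowSum f b L)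
          + (windowSum f a L - windowSum f (b + τ) L)‖ := by abel_nf
    _ ≤ ‖windowSum f b L‖ + ‖windowSum f (b + τ) L - windowSum f b L‖
          + ‖windowSum f a L - windowSum f (b + τ) L‖ := norm_add₃_le
    _ ≤ ‖windowSum f b L‖ + L * ε + 2 * ℓ * M := by
        gcongr
        · exact hτ.norm_windowSum_add_sub_le b L
        · rw [ha]; simpa using (norm_windowSum_add_int_sub_le hM (b + τ) (a - b - τ) L).trans hgap

theorem norm_windowSum_le_mul_add {L : ℕ} (hL : 0 < L) (hM : ∀ n, ‖f n‖ ≤ M)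
    (h : ∀ a, ‖windowSum f a L‖ ≤ ε * L) (a : ℤ) (m : ℕ) :
    ‖windowSum f a m‖ ≤ ε * m + L * M := by
  have hε : 0 ≤ ε := nonneg_of_mul_nonneg_left ((norm_nonneg _).trans (h 0)) (by positivity)
  have hblocks : ∀ q a, ‖windowSum f a (L * q)‖ ≤ ε * (L * q : ℕ) := by
    intro q
    induction q with
    | zero => simp [windowSum]
    | succ q ih =>
      intro a
      rw [Nat.mul_succ, windowSum_add]
      calc _ ≤ ε * (L * q : ℕ) + ε * L := (norm_add_le _ _).trans (add_le_add (ih a) (h _))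
        _ = ε * (L * q + L : ℕ) := by push_cast; ring
  have hrem : ((m % L : ℕ) : ℝ) ≤ L := by exact_mod_cast (Nat.mod_lt m hL).le
  have hM0 : 0 ≤ M := (norm_nonneg _).trans (hM 0)
  rw [← Nat.div_add_mod m L, windowSum_add]
  calc _ ≤ ε * (L * (m / L) : ℕ) + (m % L : ℕ) * M :=
        (norm_add_le _ _).trans (add_le_add (hblocks _ a) (norm_windowSum_le hM _ _))
    _ ≤ ε * (L * (m / L) + m % L : ℕ) + L * M := by
        gcongr
        exact Nat.le_add_right _ _

theorem norm_sum_Ico_le_of_windowSum {C : ℝ} (h : ∀ a m, ‖windowSum f a m‖ ≤ ε * m + C)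
    (a b : ℤ) (hab : a ≤ b) :
    ‖∑ k ∈ Ico a b, f k‖ ≤ ε * (b - a) + C := by
  have hlen : (((b - a).toNat : ℕ) : ℤ) = b - a := Int.toNat_of_nonneg (by omega)
  have hsum : windowSum f a (b - a).toNat = ∑ k ∈ Ico a b, f k := by
    rw [windowSum, hlen, add_sub_cancel]
  have hlen' : (((b - a).toNat : ℕ) : ℝ) = b - a := by exact_mod_cast hlen
  simpa only [hsum, hlen'] using h a (b - a).toNat

end WindowSum

theorem eventually_norm_windowSum_centered_le {f : ℤ → ℂ}
    (hmean : Tendsto (fun N : ℕ => (2 * (N : ℂ) + 1)⁻¹ * ∑ k ∈ Icc (-(N : ℤ)) N, f k)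
      atTop (nhds 0)) {ε : ℝ} (hε : 0 < ε) :
    ∀ᶠ N : ℕ in atTop, ‖windowSum f (-N) (2 * N + 1)‖ ≤ ε * (2 * N + 1 : ℕ) := by
  filter_upwards [Metric.tendsto_nhds.1 hmean ε hε] with N hN
  have hsum : windowSum f (-N) (2 * N + 1) = ∑ k ∈ Icc (-(N : ℤ)) N, f k := by
    rw [windowSum, ← Ico_add_one_right_eq_Icc]
    congr 2
    push_cast
    ring
  have hlen : (2 * (N : ℂ) + 1) = ((2 * N + 1 : ℕ) : ℂ) := by push_cast; ring
  rw [dist_zero_right, norm_mul, norm_inv, hlen, Complex.norm_natCast,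
    inv_mul_lt_iff₀ (by positivity)] at hN
  rw [hsum, mul_comm]
  exact hN.le

namespace AlmostPeriodicSeq

variable {f : ℤ → ℂ}

theorem exists_norm_le (hf : AlmostPeriodicSeq f) : ∃ M, ∀ n, ‖f n‖ ≤ M := by
  have hcont : Continuous (Function.eval 0 ∘ UniformFun.toFun : (ℤ →ᵤ ℂ) → ℂ) :=
    (UniformFun.uniformContinuous_eval ℂ 0).continuous
  have hrange : Set.range f ⊆ (Function.eval 0 ∘ UniformFun.toFun) '' closure (Translates f) := by
    rintro _ ⟨n, rfl⟩
    exact ⟨_, subset_closure ⟨n, rfl⟩, by simp⟩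
  obtain ⟨M, hM⟩ := isBounded_iff_forall_norm_le.1 ((hf.image hcont).isBounded.subset hrange)
  exact ⟨M, fun n => hM _ ⟨n, rfl⟩⟩

theorem exists_almostPeriods (hf : AlmostPeriodicSeq f) {ε : ℝ} (hε : 0 < ε) :
    ∃ ℓ : ℕ, ∀ k, ∃ τ, IsAlmostPeriod f ε τ ∧ (k - τ).natAbs ≤ ℓ := by
  have hU : UniformFun.gen ℤ ℂ {p | dist p.1 p.2 < ε} ∈ uniformity (ℤ →ᵤ ℂ) :=
    (UniformFun.hasBasis_uniformity ℤ ℂ).mem_of_mem (Metric.dist_mem_uniformity hε)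
  obtain ⟨t, htT, htfin, hcover⟩ := (hf.totallyBounded.subset subset_closure).exists_subset hU
  choose r hr using fun y : t => htT y.2
  have : Finite t := htfin.to_subtype
  obtain ⟨ℓ, hℓ⟩ := (Set.finite_range fun y => (r y).natAbs).bddAbove
  refine ⟨ℓ, fun k => ?_⟩
  obtain ⟨y, hky⟩ : ∃ y : t, (UniformFun.ofFun fun n => f (n + k), (y : ℤ →ᵤ ℂ))
      ∈ UniformFun.gen ℤ ℂ {p | dist p.1 p.2 < ε} := by
    simpa using hcover ⟨k, rfl⟩
  rw [hr y] at hky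
  refine ⟨k - r y, fun n => ?_, by simpa using hℓ ⟨y, rfl⟩⟩
  have h : dist (f (n - r y + k)) (f (n - r y + r y)) < ε := hky (n - r y)
  rw [dist_eq_norm, sub_add_cancel] at h
  rw [show n + (k - r y) = n - r y + k by ring]
  exact h.le

theorem exists_forall_norm_windowSum_le (hf : AlmostPeriodicSeq f)
    (hmean : Tendsto (fun N : ℕ => (2 * (N : ℂ) + 1)⁻¹ * ∑ k ∈ Icc (-(N : ℤ)) N, f k)
      atTop (nhds 0)) {ε : ℝ} (hε : 0 < ε) :
    ∃ L > 0, ∀ a, ‖windowSum f a L‖ ≤ ε * L := by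
  obtain ⟨M, hM⟩ := hf.exists_norm_le
  obtain ⟨ℓ, hℓ⟩ := hf.exists_almostPeriods (ε := ε / 3) (by positivity)
  have hlong : ∀ᶠ N : ℕ in atTop, 2 * ℓ * M / (ε / 3) ≤ N :=
    tendsto_natCast_atTop_atTop.eventually_ge_atTop _
  obtain ⟨N, hNmean, hNlong⟩ :=
    ((eventually_norm_windowSum_centered_le hmean (ε := ε / 3) (by positivity)).and hlong).exists
  refine ⟨2 * N + 1, by omega, fun a => ?_⟩
  rw [div_le_iff₀ (by positivity)] at hNlong
  have hL : ((2 * N + 1 : ℕ) : ℝ) = 2 * N + 1 := by push_cast; ring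
  have := norm_windowSum_le_of_almostPeriods hM hℓ a (-N) (2 * N + 1)
  rw [hL] at this hNmean ⊢
  nlinarith [(Nat.cast_nonneg N : (0 : ℝ) ≤ N)]

end AlmostPeriodicSeq

/-- If `f` is almost periodic with mean value zero, then the partial sums
`F(n) = ∑_{k=n₀}^n f(k)` are `o(|n|)` as `|n| → ∞`. -/
theorem stmt_2 (f : ℤ → ℂ) (hf : AlmostPeriodicSeq f) (n₀ : ℤ)
    (hmean : Filter.Tendsto
      (fun N : ℕ => (2 * (N : ℂ) + 1)⁻¹ * ∑ k ∈ Finset.Icc (-(N : ℤ)) (N : ℤ), f k)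
      Filter.atTop (nhds 0))
    (F : ℤ → ℂ)
    (hF : ∀ n : ℤ, F n = if n₀ ≤ n then ∑ k ∈ Finset.Icc n₀ n, f k
      else -∑ k ∈ Finset.Ico n n₀, f k) :
    F =o[Filter.cofinite] fun n : ℤ => (n : ℝ) := by
  have hnorm : Tendsto (fun n : ℤ => ‖(n : ℝ)‖) cofinite atTop := by
    simp_rw [Int.norm_cast_real, ← cocompact_eq_cofinite]
    exact tendsto_norm_cocompact_atTop
  refine isLittleO_of_forall_norm_le_mul_add hnorm fun ε hε => ?_
  obtain ⟨L, hL, hLε⟩ := hf.exists_forall_norm_windowSum_le hmean hε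
  obtain ⟨M, hM⟩ := hf.exists_norm_le
  have hIco := norm_sum_Ico_le_of_windowSum (norm_windowSum_le_mul_add hL hM hLε)
  refine ⟨ε * (|(n₀ : ℝ)| + 1) + L * M, fun n => ?_⟩
  rw [hF n, Real.norm_eq_abs]
  split_ifs with h
  · have := hIco n₀ (n + 1) (by omega)
    rw [Ico_add_one_right_eq_Icc] at this
    push_cast at this
    nlinarith [le_abs_self (n : ℝ), neg_abs_le (n₀ : ℝ)]
  · have := hIco n n₀ (by omega)
    rw [norm_neg]
    nlinarith [neg_abs_le (n : ℝ), le_abs_self (n₀ : ℝ)]
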